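/- Fix p ∈ (0,1) and suppose each hidden layer j of an architecture a = (a_0,...,a_D), D ≥ 3, has a_j(a_{j-1}+1) ≤ w parameters for j = 2,...,D-1. If the initialization has independent coordinates each negative with probability at least p, then the probability that the network realization N_a^{Θ_0} is a constant function is at least 1 - (1 - p^w)^{D-2}. -/

import Mathlib

open MeasureTheory ProbabilityTheory

noncomputable section

/-- `layerSum a j = ∑_{i=1}^{j} a_i (a_{i-1}+1)`, the number of parameters in layers `1,…,j`. -/
def layerSum (a : ℕ → ℕ) (j : ℕ) : ℕ := ∑ i ∈ Finset.Icc 1 j, a i * (a (i - 1) + 1)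

/-- The affine map of a layer with `m` outputs, `n` inputs, parameters read from `θ`
starting at offset `k` (weights row-wise, then biases). -/
def affApply (m n : ℕ) (θ : ℕ → ℝ) (k : ℕ) (y : Fin n → ℝ) : Fin m → ℝ :=
  fun i => (∑ l : Fin n, θ (k + i.val * n + l.val) * y l) + θ (k + m * n + i.val)

/-- Forward pass through the first `j` layers of the network, with componentwise ReLU
applied after each affine layer. -/
def fwd (a : ℕ → ℕ) (θ : ℕ → ℝ) (x : Fin (a 0) → ℝ) : (j : ℕ) → Fin (a j) → ℝ
  | 0 => x
  | j + 1 => fun i => max (affApply (a (j + 1)) (a j) θ (layerSum a j) (fwd a θ x j) i) 0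

/-- The realization `N_a^θ : ℝ^{a 0} → ℝ^{a D}` of the fully connected feedforward ReLU
network with architecture `a = (a 0, …, a D)` and parameters `θ`:
ReLU after each of the hidden layers `1,…,D-1`, linear read-out layer `D`. -/
def realization (a : ℕ → ℕ) (D : ℕ) (θ : ℕ → ℝ) (x : Fin (a 0) → ℝ) : Fin (a D) → ℝ :=
  affApply (a D) (a (D - 1)) θ (layerSum a (D - 1)) (fwd a θ x (D - 1))

/-- All weights and biases of layer `j` (the parameter block with indices in
`[layerSum a (j-1), layerSum a j)`) are strictly negative. -/
def layerNeg (a : ℕ → ℕ) (j : ℕ) (θ : ℕ → ℝ) : Prop :=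
  ∀ i, layerSum a (j - 1) ≤ i → i < layerSum a j → θ i < 0

/-- The inactive set `I_a`: some hidden layer `j` with `1 < j < D` has all its weights and
biases strictly negative. -/
def Inactive (a : ℕ → ℕ) (D : ℕ) (θ : ℕ → ℝ) : Prop :=
  ∃ j, 1 < j ∧ j < D ∧ layerNeg a j θ

end

open Function
open scoped ENNReal

/-!
If all weights and biases of a hidden layer `j ≥ 2` are negative, that layer maps the
nonnegative output of the previous ReLU layer to nonpositive values, so after its ReLU it
outputs `0` for every input and the network is constant. The parameter blocks of distinct
layers are disjoint, so the events "layer `j` is all negative" are independent; each has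
probability at least `p ^ w`, hence none of the `D - 2` of them occurs with probability at
most `(1 - p ^ w) ^ (D - 2)`.
-/

section Network

lemma layerSum_succ (a : ℕ → ℕ) (j : ℕ) :
    layerSum a (j + 1) = layerSum a j + a (j + 1) * (a j + 1) := by
  rw [layerSum, Finset.sum_Icc_succ_top (by omega), Nat.add_sub_cancel, ← layerSum]

lemma layerSum_mono (a : ℕ → ℕ) : Monotone (layerSum a) :=
  fun _ _ hij => Finset.sum_le_sum_of_subset (Finset.Icc_subset_Icc_right hij)

lemma affApply_nonpos {m n k : ℕ} {θ : ℕ → ℝ} {y : Fin n → ℝ}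
    (hθ : ∀ r < m * (n + 1), θ (k + r) ≤ 0) (hy : 0 ≤ y) : affApply m n θ k y ≤ 0 := by
  intro i
  have hi := i.isLt
  refine add_nonpos (Finset.sum_nonpos fun l _ => mul_nonpos_of_nonpos_of_nonneg ?_ (hy l)) ?_
  · have hl := l.isLt
    simpa only [add_assoc] using hθ (i * n + l) (by nlinarith)
  · simpa only [add_assoc] using hθ (m * n + i) (by nlinarith)

lemma fwd_succ_nonneg (a : ℕ → ℕ) (θ : ℕ → ℝ) (x : Fin (a 0) → ℝ) (j : ℕ) :
    0 ≤ fwd a θ x (j + 1) :=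
  fun _ => le_max_right _ _

lemma fwd_eq_zero_of_layerNeg {a : ℕ → ℕ} {θ : ℕ → ℝ} {j : ℕ} (hj : 2 ≤ j)
    (hneg : layerNeg a j θ) (x : Fin (a 0) → ℝ) : fwd a θ x j = 0 := by
  obtain ⟨k, rfl⟩ : ∃ k, j = k + 2 := ⟨j - 2, by omega⟩
  have hθ : ∀ r < a (k + 2) * (a (k + 1) + 1), θ (layerSum a (k + 1) + r) ≤ 0 := fun r hr =>
    (hneg _ (by simp) (by rw [layerSum_succ a (k + 1)]; exact Nat.add_lt_add_left hr _)).le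
  funext i
  exact max_eq_right (affApply_nonpos hθ (fwd_succ_nonneg a θ x k) i)

lemma fwd_eq_of_le {a : ℕ → ℕ} {θ : ℕ → ℝ} {x x' : Fin (a 0) → ℝ} {j k : ℕ}
    (h : fwd a θ x j = fwd a θ x' j) (hjk : j ≤ k) : fwd a θ x k = fwd a θ x' k := by
  induction k, hjk using Nat.le_induction with
  | base => exact h
  | succ k _ ih => simp only [fwd, ih]

lemma exists_realization_eq_of_inactive {a : ℕ → ℕ} {D : ℕ} {θ : ℕ → ℝ}
    (h : Inactive a D θ) : ∃ c, ∀ x, realization a D θ x = c := by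
  obtain ⟨j, hj, hjD, hneg⟩ := h
  refine ⟨realization a D θ 0, fun x => ?_⟩
  have hj0 : fwd a θ x j = fwd a θ 0 j := by
    rw [fwd_eq_zero_of_layerNeg hj hneg, fwd_eq_zero_of_layerNeg hj hneg]
  rw [realization, realization, fwd_eq_of_le hj0 (by omega : j ≤ D - 1)]

def layerBlock (a : ℕ → ℕ) (j : ℕ) : Finset ℕ :=
  Finset.Ico (layerSum a (j - 1)) (layerSum a j)

lemma card_layerBlock (a : ℕ → ℕ) {j : ℕ} (hj : 1 ≤ j) :
    (layerBlock a j).card = a j * (a (j - 1) + 1) := by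
  obtain ⟨k, rfl⟩ : ∃ k, j = k + 1 := ⟨j - 1, by omega⟩
  simp [layerBlock, layerSum_succ]

lemma pairwise_disjoint_layerBlock (a : ℕ → ℕ) : Pairwise (Disjoint on layerBlock a) := by
  suffices h : ∀ j j', j < j' → Disjoint (layerBlock a j) (layerBlock a j') from
    fun j j' hne => hne.lt_or_gt.elim (h j j') fun hlt => (h j' j hlt).symm
  intro j j' hlt
  have := layerSum_mono a (show j ≤ j' - 1 by omega)
  exact Finset.disjoint_left.2 fun i hi hi' => by
    simp only [layerBlock, Finset.mem_Ico] at hi hi'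
    omega

lemma layerNeg_iff (a : ℕ → ℕ) (j : ℕ) (θ : ℕ → ℝ) :
    layerNeg a j θ ↔ ∀ i ∈ layerBlock a j, θ i < 0 := by
  simp [layerNeg, layerBlock, and_imp]

end Network

section Independence

variable {Ω ι κ β : Type*} {mΩ : MeasurableSpace Ω} {μ : Measure Ω}

lemma measure_biInter_eq_prod_of_iIndep_blocks {m : ι → MeasurableSpace Ω}
    (hle : ∀ i, m i ≤ mΩ) (hind : iIndep m μ) {B : κ → Finset ι}
    (hB : Pairwise (Disjoint on B)) {F : κ → Set Ω}
    (hF : ∀ j, MeasurableSet[⨆ i ∈ (B j : Set ι), m i] (F j)) (s : Finset κ) :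
    μ (⋂ j ∈ s, F j) = ∏ j ∈ s, μ (F j) := by
  classical
  have := hind.isProbabilityMeasure
  induction s using Finset.induction_on with
  | empty => simp
  | insert j s hj ih =>
    have hdisj : Disjoint (B j : Set ι) (⋃ j' ∈ s, (B j' : Set ι)) :=
      Set.disjoint_iUnion₂_right.2 fun j' hj' =>
        Finset.disjoint_coe.2 (hB (ne_of_mem_of_not_mem hj' hj).symm)
    have hs : MeasurableSet[⨆ i ∈ ⋃ j' ∈ s, (B j' : Set ι), m i] (⋂ j' ∈ s, F j') :=
      Finset.measurableSet_biInter s fun j' hj' =>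
        (biSup_mono fun _ hi => Set.mem_biUnion hj' hi :
          (⨆ i ∈ (B j' : Set ι), m i) ≤ ⨆ i ∈ ⋃ j' ∈ s, (B j' : Set ι), m i) _ (hF j')
    rw [Finset.set_biInter_insert, Finset.prod_insert hj, ← ih]
    exact (Indep_iff _ _ _).1 (indep_iSup_of_disjoint hle hind hdisj) _ _ (hF j) hs

variable [MeasurableSpace β] {f : ι → Ω → β} {S : Set β}

lemma measurableSet_biInter_preimage_iSup_comap (B : Finset ι) (hS : MeasurableSet S) :
    MeasurableSet[⨆ i ∈ (B : Set ι), MeasurableSpace.comap (f i) inferInstance]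
      (⋂ i ∈ B, f i ⁻¹' S) :=
  Finset.measurableSet_biInter B fun i hi =>
    le_iSup₂ (f := fun i (_ : i ∈ (B : Set ι)) => MeasurableSpace.comap (f i) inferInstance) i hi
      _ ⟨S, hS, rfl⟩

lemma pow_card_le_measure_biInter_preimage (hf : iIndepFun f μ) (B : Finset ι)
    (hS : MeasurableSet S) {q : ℝ≥0∞} (hq : ∀ i, q ≤ μ (f i ⁻¹' S)) :
    q ^ B.card ≤ μ (⋂ i ∈ B, f i ⁻¹' S) := by
  rw [hf.meas_biInter fun i _ => ⟨S, hS, rfl⟩, ← Finset.prod_const]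
  exact Finset.prod_le_prod' fun i _ => hq i

lemma one_sub_pow_le_measure_exists_block (hfm : ∀ i, Measurable (f i)) (hf : iIndepFun f μ)
    {B : κ → Finset ι} (hB : Pairwise (Disjoint on B)) (hS : MeasurableSet S) {q : ℝ≥0∞}
    (hq : ∀ i, q ≤ μ (f i ⁻¹' S)) (hq1 : q ≤ 1) (s : Finset κ) {w : ℕ}
    (hw : ∀ j ∈ s, (B j).card ≤ w) :
    1 - (1 - q ^ w) ^ s.card ≤ μ {ω | ∃ j ∈ s, ∀ i ∈ B j, f i ω ∈ S} := by
  have := hf.isProbabilityMeasure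
  set E : κ → Set Ω := fun j => ⋂ i ∈ B j, f i ⁻¹' S
  have hEm : ∀ j, MeasurableSet (E j) := fun j =>
    Finset.measurableSet_biInter _ fun i _ => hfm i hS
  have hcompl : ∀ j ∈ s, μ (E j)ᶜ ≤ 1 - q ^ w := fun j hj => by
    rw [prob_compl_eq_one_sub (hEm j)]
    exact tsub_le_tsub_left ((pow_le_pow_of_le_one zero_le hq1 (hw j hj)).trans
      (pow_card_le_measure_biInter_preimage hf (B j) hS hq)) 1
  have hnone : μ (⋂ j ∈ s, (E j)ᶜ) ≤ (1 - q ^ w) ^ s.card := by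
    rw [measure_biInter_eq_prod_of_iIndep_blocks (fun i => (hfm i).comap_le) hf.iIndep hB
      (fun j => (measurableSet_biInter_preimage_iSup_comap (B j) hS).compl) s]
    exact Finset.prod_le_pow_card s _ _ hcompl
  have hset : {ω | ∃ j ∈ s, ∀ i ∈ B j, f i ω ∈ S} = (⋂ j ∈ s, (E j)ᶜ)ᶜ := by
    ext ω
    simp [E]
  rw [hset, prob_compl_eq_one_sub (Finset.measurableSet_biInter s fun j _ => (hEm j).compl)]
  exact tsub_le_tsub_left hnone 1

end Independence

lemma ENNReal.ofReal_one_sub_one_sub_pow {p : ℝ} (hp0 : 0 ≤ p) (hp1 : p ≤ 1) (w n : ℕ) :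
    ENNReal.ofReal (1 - (1 - p ^ w) ^ n) = 1 - (1 - ENNReal.ofReal p ^ w) ^ n := by
  have h1pw : 0 ≤ 1 - p ^ w := sub_nonneg.2 (pow_le_one₀ hp0 hp1)
  rw [ENNReal.ofReal_sub 1 (pow_nonneg h1pw _), ENNReal.ofReal_one, ENNReal.ofReal_pow h1pw,
    ENNReal.ofReal_sub 1 (pow_nonneg hp0 _), ENNReal.ofReal_one, ENNReal.ofReal_pow hp0]

theorem stmt16_general {Ω : Type*} [MeasurableSpace Ω] (μ : Measure Ω)
    (a : ℕ → ℕ) (D : ℕ)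
    (w : ℕ) (hw : ∀ j, 2 ≤ j → j ≤ D - 1 → a j * (a (j - 1) + 1) ≤ w)
    (p : ℝ) (hp : p ∈ Set.Ioo (0 : ℝ) 1)
    (Θ0 : Ω → ℕ → ℝ) (hΘ0 : Measurable Θ0)
    (hcoord : iIndepFun
      (fun i ω => Θ0 ω i) μ)
    (hneg : ∀ i : ℕ, ENNReal.ofReal p ≤ μ {ω | Θ0 ω i < 0}) :
    ENNReal.ofReal (1 - (1 - p ^ w) ^ (D - 2)) ≤
      μ {ω | ∃ c : Fin (a D) → ℝ, ∀ x : Fin (a 0) → ℝ, realization a D (Θ0 ω) x = c} := by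
  have hlayers := one_sub_pow_le_measure_exists_block (S := Set.Iio 0)
    (fun i => (measurable_pi_apply i).comp hΘ0) hcoord (pairwise_disjoint_layerBlock a)
    measurableSet_Iio hneg (ENNReal.ofReal_le_one.2 hp.2.le) (Finset.Icc 2 (D - 1))
    (w := w) fun j hj => by
      rw [Finset.mem_Icc] at hj
      rw [card_layerBlock a (by omega)]
      exact hw j hj.1 hj.2
  rw [Nat.card_Icc, show D - 1 + 1 - 2 = D - 2 by omega] at hlayers
  rw [ENNReal.ofReal_one_sub_one_sub_pow hp.1.le hp.2.le]
  refine hlayers.trans (measure_mono fun ω ⟨j, hj, hjneg⟩ => ?_)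
  rw [Finset.mem_Icc] at hj
  exact exists_realization_eq_of_inactive ⟨j, by omega, by omega, (layerNeg_iff a j _).2 hjneg⟩

/-- If every hidden layer `j ∈ {2,…,D-1}` of the architecture has at most `w` parameters
and the initialization `Θ0` has independent coordinates, each strictly negative with
probability at least `p`, then the realization `N_a^{Θ0}` is a constant function with
probability at least `1 - (1 - p^w)^{D-2}`. -/
theorem stmt16 {Ω : Type*} [MeasurableSpace Ω] (μ : Measure Ω) [IsProbabilityMeasure μ]
    (a : ℕ → ℕ) (D : ℕ) (hD : 3 ≤ D) (hpos : ∀ i, i ≤ D → 0 < a i)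
    (w : ℕ) (hw : ∀ j, 2 ≤ j → j ≤ D - 1 → a j * (a (j - 1) + 1) ≤ w)
    (p : ℝ) (hp : p ∈ Set.Ioo (0 : ℝ) 1)
    (Θ0 : Ω → ℕ → ℝ) (hΘ0 : Measurable Θ0)
    (hcoord : iIndepFun
      (fun i ω => Θ0 ω i) μ)
    (hneg : ∀ i : ℕ, ENNReal.ofReal p ≤ μ {ω | Θ0 ω i < 0}) :
    ENNReal.ofReal (1 - (1 - p ^ w) ^ (D - 2)) ≤
      μ {ω | ∃ c : Fin (a D) → ℝ, ∀ x : Fin (a 0) → ℝ, realization a D (Θ0 ω) x = c} :=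
  stmt16_general μ a D w hw p hp Θ0 hΘ0 hcoord hneg
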